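/- arXiv:1207.5381 — 3 statements merged into one kernel-verified Lean document; each statement's English description precedes it below -/
import Mathlib

section
/- If a graph G is not k-connected but is connected and has at least k+1 vertices, then there exists a vertex set S with |S| ≤ k-1 such that G \ S is disconnected, S is inclusion-minimal with this property, and there exist two vertices u, v at distance 2 in G that cannot be joined by k independent paths in G. -/
open Finset

variable {V : Type*} [DecidableEq V]

/-- A (finite abstract) simplicial complex: a nonempty, downward closed family of finite
vertex sets (the empty face is always included). -/
def IsComplex (K : Set (Finset V)) : Prop :=
  K.Nonempty ∧ ∀ σ ∈ K, ∀ τ : Finset V, τ ⊆ σ → τ ∈ K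

/-- A facet: a face maximal under inclusion. -/
def IsFacet (K : Set (Finset V)) (F : Finset V) : Prop :=
  F ∈ K ∧ ∀ G ∈ K, F ⊆ G → G = F

/-- PureCplx of dimension `d`: every face is contained in a facet and all facets have `d+1` vertices. -/
def PureCplx (K : Set (Finset V)) (d : ℕ) : Prop :=
  (∀ σ ∈ K, ∃ F, IsFacet K F ∧ σ ⊆ F) ∧ ∀ F, IsFacet K F → F.card = d + 1

def IsVertex (K : Set (Finset V)) (x : V) : Prop := ({x} : Finset V) ∈ K

/-- The 1-skeleton graph of a complex (on the ambient vertex type). -/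
def skeleton (K : Set (Finset V)) : SimpleGraph V where
  Adj x y := x ≠ y ∧ ({x, y} : Finset V) ∈ K
  symm := by
    constructor
    intro x y h
    exact ⟨h.1.symm, by rw [Finset.pair_comm]; exact h.2⟩
  loopless := ⟨fun x h => h.1 rfl⟩

/-- A clique of the 1-skeleton of `K`. -/
def IsCliqueIn (K : Set (Finset V)) (T : Finset V) : Prop :=
  ∀ u ∈ T, ∀ v ∈ T, u ≠ v → ({u, v} : Finset V) ∈ K

/-- A critical clique: removing some vertex yields a face. -/
def IsCritical (K : Set (Finset V)) (T : Finset V) : Prop :=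
  ∃ v ∈ T, T.erase v ∈ K

/-- `K` contains the boundary complex of a `(d+1)`-simplex as a subcomplex. -/
def ContainsSimplexBoundary (K : Set (Finset V)) (d : ℕ) : Prop :=
  ∃ S : Finset V, S.card = d + 2 ∧ ∀ τ : Finset V, τ ⊆ S → τ ≠ S → τ ∈ K

/-- Banner (for a pure `d`-complex): every critical `(d+1)`-clique is spanning and no
boundary of a `(d+1)`-simplex occurs as a subcomplex. -/
def Banner (K : Set (Finset V)) (d : ℕ) : Prop :=
  (∀ T : Finset V, IsCliqueIn K T → T.card = d + 1 → IsCritical K T → T ∈ K) ∧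
    ¬ ContainsSimplexBoundary K d

/-- Strongly banner: every `(d+1)`-clique is spanning and no boundary of a `(d+1)`-simplex
occurs as a subcomplex. -/
def StronglyBanner (K : Set (Finset V)) (d : ℕ) : Prop :=
  (∀ T : Finset V, IsCliqueIn K T → T.card = d + 1 → T ∈ K) ∧
    ¬ ContainsSimplexBoundary K d

/-- FlagCplx: every clique of the 1-skeleton is a face. -/
def FlagCplx (K : Set (Finset V)) : Prop :=
  ∀ T : Finset V, IsCliqueIn K T → T ∈ K

/-- The link of a face `σ`. -/
def link (K : Set (Finset V)) (σ : Finset V) : Set (Finset V) :=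
  {τ : Finset V | Disjoint τ σ ∧ τ ∪ σ ∈ K}

/-- The facet graph of a pure `d`-complex: facets adjacent when they share a `(d-1)`-face
(i.e. their intersection has `d` vertices). -/
def facetGraph (K : Set (Finset V)) (d : ℕ) : SimpleGraph {F : Finset V // IsFacet K F} where
  Adj F G := F ≠ G ∧ ((F : Finset V) ∩ (G : Finset V)).card = d
  symm := by
    constructor
    intro F G h
    exact ⟨h.1.symm, by rw [Finset.inter_comm]; exact h.2⟩
  loopless := ⟨fun F h => h.1 rfl⟩

/-- Strong connectivity: the facet graph is connected. -/
def StronglyConnected (K : Set (Finset V)) (d : ℕ) : Prop :=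
  (facetGraph K d).Connected

/-- A `d`-dimensional pseudomanifold: pure `d`-complex, every `(d-1)`-face is in exactly
two facets, and the facet graph is connected. -/
def Pseudomanifold (K : Set (Finset V)) (d : ℕ) : Prop :=
  IsComplex K ∧ PureCplx K d ∧
    (∀ σ ∈ K, σ.card = d → {F : Finset V | IsFacet K F ∧ σ ⊆ F}.ncard = 2) ∧
    StronglyConnected K d

/-- Connectivity of a complex: the 1-skeleton induced on its vertex set is connected. -/
def ComplexConnected (K : Set (Finset V)) : Prop :=
  ((skeleton K).induce {x : V | IsVertex K x}).Connected

/-- A normal pseudomanifold: all links of faces of dimension at least one are connected. -/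
def NormalPM (K : Set (Finset V)) (d : ℕ) : Prop :=
  Pseudomanifold K d ∧ ∀ σ ∈ K, σ.card + 1 ≤ d → ComplexConnected (link K σ)

/-- The closed neighborhood `N(x)`: `x` together with its neighbors. -/
def closedNbhd (K : Set (Finset V)) (x : V) : Set V :=
  {x} ∪ {z : V | ({x, z} : Finset V) ∈ K}

/-- The subcomplex induced on a set `A` of vertices. -/
def inducedSub (K : Set (Finset V)) (A : Set V) : Set (Finset V) :=
  {σ ∈ K | ∀ v ∈ σ, v ∈ A}

/-- The antistar of a vertex: the induced subcomplex on all other vertices. -/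
def antistar (K : Set (Finset V)) (x : V) : Set (Finset V) :=
  {σ ∈ K | x ∉ σ}

/-- `K` is the boundary of a triangle, i.e. the 3-cycle `C₃`. -/
def IsC3 (K : Set (Finset V)) : Prop :=
  ∃ a b c : V, a ≠ b ∧ a ≠ c ∧ b ≠ c ∧
    K = {τ : Finset V | τ ⊆ ({a, b, c} : Finset V) ∧ τ ≠ ({a, b, c} : Finset V)}

/-- The banner number of a pure `d`-complex. -/
noncomputable def bannerNumber (K : Set (Finset V)) (d : ℕ) : ℕ :=
  sInf {j : ℕ | ∀ σ ∈ K, σ.card = j → Banner (link K σ) (d - j) ∨ IsC3 (link K σ)}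

/-- `k`-connectivity of a graph: more than `k` vertices, and removing fewer than `k`
vertices leaves it connected. -/
def KConnected {W : Type*} [Fintype W] [DecidableEq W] (G : SimpleGraph W) (k : ℕ) : Prop :=
  k < Fintype.card W ∧
    ∀ S : Finset W, S.card < k → (G.induce ((↑S : Set W)ᶜ)).Connected

/-- Existence of `k` pairwise independent `u`–`v` paths: paths sharing no vertices other
than `u` and `v`. -/
def IndepPaths {W : Type*} (G : SimpleGraph W) (u v : W) (k : ℕ) : Prop :=
  ∃ p : Fin k → G.Walk u v, (∀ i, (p i).IsPath) ∧
    ∀ i j, i ≠ j → ∀ w : W, w ∈ (p i).support → w ∈ (p j).support → w = u ∨ w = v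

/-
Shrink a disconnecting set of fewer than `k` vertices to an inclusion-minimal one `S`. Pick
`x ∈ S` and vertices `a`, `b` in different components of `G - S`. Since `G - (S \ {x})` is
connected, `a` and `b` both reach `x` there, and the last vertices `u`, `v` before `x` on such
walks lie in the components of `a` and `b` in `G - S`. So `u` and `v` are non-adjacent with the
common neighbour `x`, and every `u`–`v` path meets `S`, so independent `u`–`v` paths number at
most `|S| < k`.
-/

namespace SimpleGraph

variable {W : Type*} {G : SimpleGraph W}

lemma Reachable.exists_walk_of_induce {s : Set W} {a b : s} (h : (G.induce s).Reachable a b) :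
    ∃ p : G.Walk a b, ∀ w ∈ p.support, w ∈ s :=
  h.elim fun q => ⟨q.map (Embedding.induce s).toHom, fun w hw => by
    obtain ⟨y, -, rfl⟩ := List.mem_map.mp (Walk.support_map _ q ▸ hw)
    exact y.2⟩

lemma Walk.exists_mem_support_of_not_reachable_induce_compl {t : Set W} {u v : W}
    (p : G.Walk u v) (hu : u ∈ tᶜ) (hv : v ∈ tᶜ)
    (huv : ¬ (G.induce tᶜ).Reachable ⟨u, hu⟩ ⟨v, hv⟩) : ∃ w ∈ p.support, w ∈ t := by
  by_contra! hp
  exact huv ⟨p.induce tᶜ hp⟩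

lemma Walk.exists_adj_reachable_induce {s : Set W} {a x : W} (hx : x ∉ s) :
    ∀ (p : G.Walk a x), (∀ w ∈ p.support, w ∈ insert x s) → ∀ (ha : a ∈ s),
      ∃ u, ∃ hu : u ∈ s, G.Adj u x ∧ (G.induce s).Reachable ⟨a, ha⟩ ⟨u, hu⟩
  | .nil, _, ha => absurd ha hx
  | .cons (v := a') haa' p, hp, ha => by
    by_cases ha'x : a' = x
    · subst ha'x
      exact ⟨a, ha, haa', .rfl⟩
    have ha' : a' ∈ s := (Set.mem_insert_iff.mp (hp a' (by simp))).resolve_left ha'x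
    obtain ⟨u, hu, hux, hreach⟩ :=
      exists_adj_reachable_induce hx p (fun w hw => hp w (by simp [hw])) ha'
    have hadj : (G.induce s).Adj ⟨a, ha⟩ ⟨a', ha'⟩ := induce_adj.mpr haa'
    exact ⟨u, hu, hux, hadj.reachable.trans hreach⟩

lemma exists_adj_adj_not_reachable_induce {s : Set W} {x a b : W} (hx : x ∉ s)
    (hconn : (G.induce (insert x s)).Preconnected) (ha : a ∈ s) (hb : b ∈ s)
    (hab : ¬ (G.induce s).Reachable ⟨a, ha⟩ ⟨b, hb⟩) :
    ∃ u v, ∃ (hu : u ∈ s) (hv : v ∈ s),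
      G.Adj u x ∧ G.Adj x v ∧ ¬ (G.induce s).Reachable ⟨u, hu⟩ ⟨v, hv⟩ := by
  have walk_to_x (c : W) (hc : c ∈ s) : ∃ p : G.Walk c x, ∀ w ∈ p.support, w ∈ insert x s :=
    (hconn ⟨c, Set.mem_insert_of_mem x hc⟩ ⟨x, Set.mem_insert x s⟩).exists_walk_of_induce
  obtain ⟨p, hp⟩ := walk_to_x a ha
  obtain ⟨q, hq⟩ := walk_to_x b hb
  obtain ⟨u, hu, hux, hau⟩ := p.exists_adj_reachable_induce hx hp ha
  obtain ⟨v, hv, hvx, hbv⟩ := q.exists_adj_reachable_induce hx hq hb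
  exact ⟨u, v, hu, hv, hux, hvx.symm, fun huv => hab (hau.trans (huv.trans hbv.symm))⟩

lemma dist_eq_two_of_adj_of_adj {u x v : W} (hux : G.Adj u x) (hxv : G.Adj x v) (hne : u ≠ v)
    (hnadj : ¬ G.Adj u v) : G.dist u v = 2 := by
  have : G.edist u v = 2 :=
    edist_eq_two_iff.mpr ⟨hne, hnadj, x, G.mem_commonNeighbors.mpr ⟨hux, hxv.symm⟩⟩
  simp [dist, this]

lemma exists_adj_adj_not_reachable_of_minimal_cut {S : Finset W}
    (hG : G.Connected) (hS : ¬ (G.induce ((↑S : Set W)ᶜ)).Preconnected)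
    (hmin : ∀ T : Finset W, T ⊂ S → (G.induce ((↑T : Set W)ᶜ)).Connected) :
    ∃ u x v, x ∈ S ∧ G.Adj u x ∧ G.Adj x v ∧ ∃ (hu : u ∈ (↑S : Set W)ᶜ) (hv : v ∈ (↑S : Set W)ᶜ),
      ¬ (G.induce ((↑S : Set W)ᶜ)).Reachable ⟨u, hu⟩ ⟨v, hv⟩ := by
  classical
  simp only [Preconnected, not_forall] at hS
  obtain ⟨⟨a, ha⟩, ⟨b, hb⟩, hab⟩ := hS
  obtain ⟨x, hx⟩ : S.Nonempty := by
    rw [Finset.nonempty_iff_ne_empty]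
    rintro rfl
    obtain ⟨w, -, hw⟩ := (hG.preconnected a b).some.exists_mem_support_of_not_reachable_induce_compl
      ha hb hab
    simp at hw
  have hinsert : insert x (↑S : Set W)ᶜ = (↑(S.erase x) : Set W)ᶜ := by
    ext w
    by_cases hw : w = x <;> simp [hw, hx]
  obtain ⟨u, v, hu, hv, hux, hxv, huv⟩ := exists_adj_adj_not_reachable_induce (by simpa using hx)
    (hinsert ▸ (hmin _ (Finset.erase_ssubset hx)).preconnected) ha hb hab
  exact ⟨u, x, v, hx, hux, hxv, hu, hv, huv⟩

end SimpleGraph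

open SimpleGraph

lemma IndepPaths.le_card_of_forall_walk_meets {W : Type*} {G : SimpleGraph W} {u v : W} {k : ℕ}
    {S : Finset W} (h : IndepPaths G u v k) (hu : u ∉ S) (hv : v ∉ S)
    (hS : ∀ p : G.Walk u v, ∃ w ∈ p.support, w ∈ S) : k ≤ S.card := by
  obtain ⟨p, -, hindep⟩ := h
  choose f hf hfS using fun i => hS (p i)
  have hinj : Function.Injective f := by
    intro i j hij
    by_contra hne
    rcases hindep i j hne (f i) (hf i) (hij ▸ hf j) with h | h
    · exact hu (h ▸ hfS i)
    · exact hv (h ▸ hfS i)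
  simpa using Finset.card_le_card_of_injOn (s := Finset.univ) f (fun i _ => hfS i) hinj.injOn

/-- If a connected graph with at least `k+1` vertices is not `k`-connected, there is an
inclusion-minimal disconnecting set of at most `k-1` vertices, and a pair of vertices at
distance 2 not joined by `k` independent paths. -/
theorem exists_min_cut_and_bad_pair {W : Type*} [Fintype W] [DecidableEq W]
    (G : SimpleGraph W) (k : ℕ)
    (hnk : ¬ KConnected G k) (hconn : G.Connected) (hcard : k + 1 ≤ Fintype.card W) :
    ∃ S : Finset W, S.card ≤ k - 1 ∧ ¬ (G.induce ((↑S : Set W)ᶜ)).Connected ∧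
      (∀ T : Finset W, T ⊂ S → (G.induce ((↑T : Set W)ᶜ)).Connected) ∧
      ∃ u v : W, G.dist u v = 2 ∧ ¬ IndepPaths G u v k := by
  obtain ⟨S₀, hS₀k, hS₀⟩ :
      ∃ S₀ : Finset W, S₀.card < k ∧ ¬ (G.induce ((↑S₀ : Set W)ᶜ)).Connected := by
    by_contra! h
    exact hnk ⟨hcard, h⟩
  obtain ⟨S, hSS₀, hSmin⟩ := exists_minimal_le_of_wellFoundedLT
    (fun T : Finset W => ¬ (G.induce ((↑T : Set W)ᶜ)).Connected) S₀ hS₀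
  have hmin (T : Finset W) (hT : T ⊂ S) : (G.induce ((↑T : Set W)ᶜ)).Connected :=
    not_not.mp (hSmin.not_prop_of_lt hT)
  have hSk : S.card < k := (Finset.card_le_card hSS₀).trans_lt hS₀k
  obtain ⟨y, -, hy⟩ := Finset.exists_mem_notMem_of_card_lt_card (t := Finset.univ)
    (hSk.trans (by simpa using hcard))
  have : Nonempty ((↑S : Set W)ᶜ : Set W) := ⟨⟨y, hy⟩⟩
  obtain ⟨u, x, v, -, hux, hxv, hu, hv, huv⟩ :=
    exists_adj_adj_not_reachable_of_minimal_cut hconn (fun h => hSmin.prop ⟨h⟩) hmin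
  refine ⟨S, by omega, hSmin.prop, hmin, u, v, dist_eq_two_of_adj_of_adj hux hxv ?_ ?_, fun h => ?_⟩
  · rintro rfl
    exact huv .rfl
  · exact fun h => huv (induce_adj.mpr h : (G.induce _).Adj _ _).reachable
  · exact (h.le_card_of_forall_walk_meets hu hv
      fun p => p.exists_mem_support_of_not_reachable_induce_compl hu hv huv).not_gt hSk
end

section
/- Let Δ be a banner d-dimensional simplicial pseudomanifold and let {x,y} be an edge of Δ. Then the closed neighborhood N(y) is not contained in the closed neighborhood N(x); equivalently, there exists a vertex w adjacent to y in Δ that is not adjacent to x and distinct from x. -/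
open Finset

variable {V : Type*} [DecidableEq V]

/-! Choose a facet `F` through the edge `xy`. The pseudomanifold property gives a second facet `G`
through the ridge `F \ {x}`, so `x ∉ G` and `y ∈ G`. If `x` were adjacent to every vertex of `G`,
the banner property would make each `x ∪ (G \ {v})` a face, so the boundary of the simplex
`x ∪ G` would lie in `K`, which banner complexes exclude. Hence some `w ∈ G`, a neighbour of `y`,
is not adjacent to `x`. -/

variable {K : Set (Finset V)} {d : ℕ}

theorem IsComplex.pair_mem (hK : IsComplex K) {σ : Finset V} (hσ : σ ∈ K) {u v : V}
    (hu : u ∈ σ) (hv : v ∈ σ) : ({u, v} : Finset V) ∈ K :=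
  hK.2 σ hσ _ (insert_subset hu (singleton_subset_iff.2 hv))

theorem exists_facet_across (hK : IsComplex K) (hpure : PureCplx K d)
    (htwo : ∀ σ ∈ K, σ.card = d → {F : Finset V | IsFacet K F ∧ σ ⊆ F}.ncard = 2)
    {F : Finset V} (hF : IsFacet K F) {x : V} (hx : x ∈ F) :
    ∃ G, IsFacet K G ∧ F.erase x ⊆ G ∧ x ∉ G := by
  have hridge : (F.erase x).card = d := by
    rw [card_erase_of_mem hx, hpure.2 F hF]; rfl
  obtain ⟨G, ⟨hG, hFG⟩, hGF⟩ :=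
    Set.exists_ne_of_one_lt_ncard
      (htwo _ (hK.2 F hF.1 _ (erase_subset x F)) hridge ▸ one_lt_two) F
  refine ⟨G, hG, hFG, fun hxG => hGF (hF.2 G hG.1 fun v hv => ?_)⟩
  by_cases hvx : v = x
  · exact hvx ▸ hxG
  · exact hFG (mem_erase.2 ⟨hvx, hv⟩)

theorem isCliqueIn_insert (hK : IsComplex K) {σ : Finset V} (hσ : σ ∈ K) {x : V}
    (hx : ∀ w ∈ σ, ({x, w} : Finset V) ∈ K) : IsCliqueIn K (insert x σ) := by
  intro u hu v hv huv
  rcases mem_insert.1 hu with rfl | huσ <;> rcases mem_insert.1 hv with rfl | hvσ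
  · exact absurd rfl huv
  · exact hx v hvσ
  · rw [pair_comm]; exact hx u huσ
  · exact hK.pair_mem hσ huσ hvσ

theorem Banner.insert_mem (hb : Banner K d) (hK : IsComplex K) {σ : Finset V} (hσ : σ ∈ K)
    (hcard : σ.card = d) {x : V} (hxσ : x ∉ σ) (hx : ∀ w ∈ σ, ({x, w} : Finset V) ∈ K) :
    insert x σ ∈ K :=
  hb.1 _ (isCliqueIn_insert hK hσ hx) (by rw [card_insert_of_notMem hxσ, hcard])
    ⟨x, mem_insert_self x σ, by rwa [erase_insert hxσ]⟩

theorem Banner.exists_not_adjacent (hb : Banner K d) (hK : IsComplex K) {G : Finset V}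
    (hG : G ∈ K) (hcard : G.card = d + 1) {x : V} (hxG : x ∉ G) :
    ∃ w ∈ G, ({x, w} : Finset V) ∉ K := by
  by_contra! hx
  refine hb.2 ⟨insert x G, by rw [card_insert_of_notMem hxG, hcard], fun τ hτ hτne => ?_⟩
  obtain ⟨v, hv, hvτ⟩ := exists_of_ssubset (Finset.ssubset_iff_subset_ne.2 ⟨hτ, hτne⟩)
  have hτv : τ ⊆ (insert x G).erase v := fun u hu =>
    mem_erase.2 ⟨fun h => hvτ (h ▸ hu), hτ hu⟩
  refine hK.2 _ ?_ τ hτv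
  rcases mem_insert.1 hv with rfl | hvG
  · rwa [erase_insert hxG]
  · have hvx : x ≠ v := fun h => hxG (h ▸ hvG)
    rw [erase_insert_of_ne hvx]
    exact hb.insert_mem hK (hK.2 G hG _ (erase_subset v G))
      (by rw [card_erase_of_mem hvG, hcard]; rfl)
      (fun h => hxG (mem_of_mem_erase h)) fun w hw => hx w (mem_of_mem_erase hw)

/-- In a banner pseudomanifold, for any edge `{x,y}` the closed neighborhood of `y` is not
contained in the closed neighborhood of `x`: some neighbor of `y` is neither `x` nor
adjacent to `x`. -/
theorem nbhd_not_subset (K : Set (Finset V)) (d : ℕ)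
    (hpm : Pseudomanifold K d) (hb : Banner K d)
    (x y : V) (hxy : x ≠ y) (he : ({x, y} : Finset V) ∈ K) :
    ¬ closedNbhd K y ⊆ closedNbhd K x ∧
      ∃ w : V, w ≠ x ∧ w ≠ y ∧ ({y, w} : Finset V) ∈ K ∧ ({x, w} : Finset V) ∉ K := by
  obtain ⟨hK, hpure, htwo, -⟩ := hpm
  obtain ⟨F, hF, hxyF⟩ := hpure.1 _ he
  obtain ⟨G, hG, hFG, hxG⟩ :=
    exists_facet_across hK hpure htwo hF (hxyF (mem_insert_self x {y}))
  have hyG : y ∈ G := hFG (mem_erase.2 ⟨hxy.symm, hxyF (by simp)⟩)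
  obtain ⟨w, hwG, hxw⟩ := hb.exists_not_adjacent hK hG.1 (hpure.2 G hG) hxG
  have hwx : w ≠ x := fun h => hxG (h ▸ hwG)
  have hwy : w ≠ y := fun h => hxw (h ▸ he)
  have hyw : ({y, w} : Finset V) ∈ K := hK.pair_mem hG.1 hyG hwG
  refine ⟨fun hsub => ?_, w, hwx, hwy, hyw, hxw⟩
  rcases hsub (Or.inr hyw : w ∈ closedNbhd K y) with h | h
  exacts [hwx h, hxw h]
end

section
/- If Δ is a banner simplicial pseudomanifold, then the 1-skeleton graph of Δ is not a complete graph. -/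
open Finset

variable {V : Type*} [DecidableEq V]

/- Take a facet `F` of `Δ` and a vertex `w ∉ F` (a ridge of `F` lies in a second facet, which
cannot be contained in `F`). If the 1-skeleton were complete, `F ∪ {w}` would be a
`(d+2)`-clique. Each of its `(d+1)`-subsets through `w` becomes a face of `F` after deleting `w`,
so it is a critical clique, hence a face by bannerness; the remaining subset is `F` itself.
Thus `Δ` contains the boundary of the simplex on `F ∪ {w}`, which bannerness forbids. -/

theorem IsCliqueIn.mono {K : Set (Finset V)} {S T : Finset V} (hS : IsCliqueIn K S)
    (hTS : T ⊆ S) : IsCliqueIn K T :=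
  fun u hu v hv huv => hS u (hTS hu) v (hTS hv) huv

theorem IsComplex.containsSimplexBoundary_of_erase_mem {K : Set (Finset V)}
    (hK : IsComplex K) {d : ℕ} {S : Finset V} (hS : S.card = d + 2)
    (herase : ∀ u ∈ S, S.erase u ∈ K) :
    ContainsSimplexBoundary K d := by
  refine ⟨S, hS, fun τ hτS hτne => ?_⟩
  obtain ⟨u, huS, huτ⟩ := exists_of_ssubset (hτS.ssubset_of_ne hτne)
  exact hK.2 _ (herase u huS) τ (subset_erase.mpr ⟨hτS, huτ⟩)

theorem Pseudomanifold.exists_vertex_not_mem {K : Set (Finset V)} {d : ℕ}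
    (hK : Pseudomanifold K d) {F : Finset V} (hF : IsFacet K F) :
    ∃ w, IsVertex K w ∧ w ∉ F := by
  obtain ⟨hcplx, ⟨-, hcard⟩, hridge, -⟩ := hK
  obtain ⟨v, hv⟩ : F.Nonempty := card_pos.mp (by rw [hcard F hF]; omega)
  have hridgeF : F.erase v ∈ K := hcplx.2 F hF.1 _ (erase_subset v F)
  have htwo := hridge _ hridgeF (by rw [card_erase_of_mem hv, hcard F hF]; rfl)
  obtain ⟨G, hG, hGF⟩ : ∃ G ∈ {G | IsFacet K G ∧ F.erase v ⊆ G}, G ≠ F := by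
    obtain ⟨A, B, hAB, hset⟩ := Set.ncard_eq_two.mp htwo
    by_cases hA : A = F
    · exact ⟨B, by rw [hset]; simp, fun hB => hAB (hA.trans hB.symm)⟩
    · exact ⟨A, by rw [hset]; simp, hA⟩
  obtain ⟨w, hwG, hwF⟩ := not_subset.mp fun hsub => hGF (hG.1.2 F hF.1 hsub).symm
  exact ⟨w, hcplx.2 G hG.1.1 {w} (singleton_subset_iff.mpr hwG), hwF⟩

theorem Banner.not_isCliqueIn_insert {K : Set (Finset V)} {d : ℕ} (hK : IsComplex K)
    (hb : Banner K d) {F : Finset V} (hF : F ∈ K) (hcard : F.card = d + 1) {w : V}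
    (hwF : w ∉ F) : ¬ IsCliqueIn K (insert w F) := by
  intro hclique
  have hS : (insert w F).card = d + 2 := by rw [card_insert_of_notMem hwF, hcard]
  refine hb.2 (hK.containsSimplexBoundary_of_erase_mem hS fun u hu => ?_)
  rcases eq_or_ne u w with rfl | huw
  · rwa [erase_insert hwF]
  have huF : u ∈ F := (mem_insert.mp hu).resolve_left huw
  rw [erase_insert_of_ne huw.symm]
  have hwFu : w ∉ F.erase u := fun h => hwF (mem_of_mem_erase h)
  refine hb.1 _ (hclique.mono (insert_subset_insert w (erase_subset u F))) ?_
    ⟨w, mem_insert_self w _, ?_⟩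
  · rw [card_insert_of_notMem hwFu, card_erase_of_mem huF, hcard]; rfl
  · rw [erase_insert hwFu]
    exact hK.2 F hF _ (erase_subset u F)

/-- The 1-skeleton of a banner pseudomanifold is not a complete graph: some two vertices
of the complex are not joined by an edge. -/
theorem skeleton_not_complete (K : Set (Finset V)) (d : ℕ)
    (hpm : Pseudomanifold K d) (hb : Banner K d) :
    ∃ x y : V, IsVertex K x ∧ IsVertex K y ∧ x ≠ y ∧ ({x, y} : Finset V) ∉ K := by
  by_contra! hcomplete
  have hK := hpm.1
  obtain ⟨hfacet, hcard⟩ := hpm.2.1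
  obtain ⟨σ, hσ⟩ := hK.1
  obtain ⟨F, hF, -⟩ := hfacet σ hσ
  obtain ⟨w, hw, hwF⟩ := hpm.exists_vertex_not_mem hF
  have hvertex : ∀ x ∈ insert w F, IsVertex K x := by
    intro x hx
    rcases mem_insert.mp hx with rfl | hxF
    · exact hw
    · exact hK.2 F hF.1 {x} (singleton_subset_iff.mpr hxF)
  exact hb.not_isCliqueIn_insert hK hF.1 (hcard F hF) hwF
    fun x hx y hy hxy => hcomplete x y (hvertex x hx) (hvertex y hy) hxy
end
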